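/- Let 0 < d < b < 1 be real constants. For each natural number n ≥ 2, set m_n = ⌈n^d⌉ and ς_n = ⌈min{ n, 2n·(1 − n^{d−b}) }⌉, and place ς_n balls independently and uniformly at random into m_n bins; let ς̄ denote the maximum bin load. Then P(ς̄ ≤ 2·ς_n/m_n) → 1 as n → ∞. -/

import Mathlib

/-!
Chernoff bound with base `2`: for a fixed bin, `∑_ω 2 ^ load ω = (m + 1) ^ s` over all `m ^ s`
assignments of `s` balls to `m` bins, so by Markov's inequality and a union bound over the bins
the fraction of assignments overloading some bin beyond `2 s / m` is at most
`m ((m + 1) / m) ^ s 2 ^ (-2 s / m) ≤ m exp (-(2 log 2 - 1) s / m)`.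
Eventually `ς_n = n` (as `n ^ (d - b) → 0`) and `n ^ d ≤ m_n ≤ 2 n ^ d`, so this is at most
`2 n exp (-(2 log 2 - 1) n ^ (1 - d) / 2)`, which tends to `0` because `d < 1`.
-/

open Finset Filter Real Topology

section Load

variable {α β : Type*} [Fintype α] [DecidableEq α] [Fintype β] [DecidableEq β]

def binLoad (ω : α → β) (i : β) : ℕ := #{j | ω j = i}

theorem sum_pow_binLoad {R : Type*} [CommSemiring R] (x : R) (i : β) :
    ∑ ω : α → β, (x + 1) ^ binLoad ω i = (Fintype.card β + x) ^ Fintype.card α := by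
  have hprod (ω : α → β) : (x + 1) ^ binLoad ω i = ∏ j, if ω j = i then x + 1 else 1 := by
    rw [← prod_filter, prod_const, binLoad]
  have hsum : ∑ v : β, (if v = i then x + 1 else 1) = Fintype.card β + x := by
    have hsplit (v : β) : (if v = i then x + 1 else 1) = (if v = i then x else 0) + 1 := by
      split_ifs <;> simp
    simp [hsplit, sum_add_distrib, add_comm]
  calc ∑ ω : α → β, (x + 1) ^ binLoad ω i
      = ∑ ω : α → β, ∏ j, if ω j = i then x + 1 else 1 := Fintype.sum_congr _ _ hprod
    _ = ∏ _j : α, ∑ v : β, if v = i then x + 1 else 1 :=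
        (Fintype.prod_sum (κ := fun _ : α => β) fun _ v => if v = i then x + 1 else 1).symm
    _ = _ := by rw [hsum, prod_const, card_univ]

theorem card_lt_binLoad_mul_le (i : β) (t : ℝ) :
    #{ω : α → β | t < binLoad ω i} * (2 : ℝ) ^ t
      ≤ (Fintype.card β + 1) ^ Fintype.card α := by
  have hmarkov : ∀ ω ∈ ({ω : α → β | t < binLoad ω i} : Finset _),
      (2 : ℝ) ^ t ≤ 2 ^ binLoad ω i := fun ω hω => by
      rw [← rpow_natCast]
      exact rpow_le_rpow_of_exponent_le one_le_two (mem_filter.1 hω).2.le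
  calc #{ω : α → β | t < binLoad ω i} * (2 : ℝ) ^ t
      ≤ ∑ ω ∈ {ω : α → β | t < binLoad ω i}, (2 : ℝ) ^ binLoad ω i := by
        simpa [nsmul_eq_mul] using card_nsmul_le_sum _ _ _ hmarkov
    _ ≤ ∑ ω : α → β, (2 : ℝ) ^ binLoad ω i :=
        sum_le_sum_of_subset_of_nonneg (subset_univ _) fun _ _ _ => by positivity
    _ = _ := by rw [← sum_pow_binLoad (1 : ℝ) i, one_add_one_eq_two]

theorem card_exists_lt_binLoad_mul_le (t : ℝ) :
    #{ω : α → β | ∃ i, t < binLoad ω i} * (2 : ℝ) ^ t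
      ≤ Fintype.card β * (Fintype.card β + 1) ^ Fintype.card α := by
  have hunion : #{ω : α → β | ∃ i, t < binLoad ω i}
      ≤ ∑ i : β, #{ω : α → β | t < binLoad ω i} := by
    refine (card_le_card fun ω hω => ?_).trans card_biUnion_le
    simpa using hω
  calc #{ω : α → β | ∃ i, t < binLoad ω i} * (2 : ℝ) ^ t
      ≤ ∑ i : β, #{ω : α → β | t < binLoad ω i} * (2 : ℝ) ^ t := by
        rw [← sum_mul]
        gcongr
        exact_mod_cast hunion
    _ ≤ ∑ _i : β, ((Fintype.card β : ℝ) + 1) ^ Fintype.card α :=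
        sum_le_sum fun i _ => card_lt_binLoad_mul_le i t
    _ = _ := by simp

end Load

noncomputable def probMaxLoadLE (s m : ℕ) (t : ℝ) : ℝ :=
  #{ω : Fin s → Fin m | ∀ i, (binLoad ω i : ℝ) ≤ t} / (m : ℝ) ^ s

theorem probMaxLoadLE_le_one (s m : ℕ) (t : ℝ) : probMaxLoadLE s m t ≤ 1 := by
  refine div_le_one_of_le₀ ?_ (by positivity)
  exact_mod_cast (card_filter_le _ _).trans_eq (by simp)

theorem one_sub_mul_exp_le_probMaxLoadLE (s : ℕ) {m : ℕ} (hm : 0 < m) :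
    1 - m * exp (-(2 * log 2 - 1) * (s / m)) ≤ probMaxLoadLE s m (2 * s / m) := by
  set t : ℝ := 2 * s / m with ht
  have hm' : (0 : ℝ) < m := by exact_mod_cast hm
  have hcompl : probMaxLoadLE s m t =
      1 - #{ω : Fin s → Fin m | ∃ i, t < binLoad ω i} / (m : ℝ) ^ s := by
    have h := card_filter_add_card_filter_not (s := (univ : Finset (Fin s → Fin m)))
      (fun ω => ∀ i, (binLoad ω i : ℝ) ≤ t)
    simp only [not_forall, not_le, card_univ, Fintype.card_pi, Fintype.card_fin, prod_const] at h
    rw [probMaxLoadLE, eq_sub_iff_add_eq, ← add_div, div_eq_one_iff_eq (by positivity)]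
    exact_mod_cast h
  have hbad :
      (#{ω : Fin s → Fin m | ∃ i, t < binLoad ω i} : ℝ) * 2 ^ t ≤ m * (m + 1) ^ s := by
    convert card_exists_lt_binLoad_mul_le (α := Fin s) (β := Fin m) t using 3
    · congr!
    all_goals simp
  have hbase : ((m + 1 : ℝ) / m) ^ s ≤ exp (s / m) := by
    calc ((m + 1 : ℝ) / m) ^ s = (1 / m + 1) ^ s := by rw [add_div, div_self hm'.ne', add_comm]
      _ ≤ exp (1 / m) ^ s := by gcongr; exact add_one_le_exp _
      _ = exp (s / m) := by rw [← exp_nat_mul, mul_one_div]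
  have htwo : (2 : ℝ) ^ t = exp (2 * log 2 * (s / m)) := by
    rw [rpow_def_of_pos two_pos, ht]; ring_nf
  rw [hcompl, sub_le_sub_iff_left]
  calc (#{ω : Fin s → Fin m | ∃ i, t < binLoad ω i} : ℝ) / m ^ s
      ≤ m * (m + 1) ^ s / 2 ^ t / m ^ s := by
        gcongr
        exact (le_div_iff₀ (by positivity)).2 hbad
    _ = m * ((m + 1) / m) ^ s / 2 ^ t := by rw [div_pow]; field_simp
    _ ≤ m * exp (s / m) / exp (2 * log 2 * (s / m)) := by rw [htwo]; gcongr
    _ = m * exp (-(2 * log 2 - 1) * (s / m)) := by rw [mul_div_assoc, ← exp_sub]; ring_nf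

theorem tendsto_natCast_mul_exp_neg_mul_rpow {c e : ℝ} (hc : 0 < c) (he : 0 < e) :
    Tendsto (fun n : ℕ => (n : ℝ) * exp (-c * (n : ℝ) ^ e)) atTop (𝓝 0) := by
  have h := (tendsto_rpow_mul_exp_neg_mul_atTop_nhds_zero e⁻¹ c hc).comp
    ((tendsto_rpow_atTop he).comp tendsto_natCast_atTop_atTop)
  refine h.congr fun n => ?_
  simp only [Function.comp_apply]
  rw [← rpow_mul n.cast_nonneg, mul_inv_cancel₀ he.ne', rpow_one]

theorem eventually_min_self_two_mul_one_sub_rpow {a : ℝ} (ha : a < 0) :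
    ∀ᶠ n : ℕ in atTop, min (n : ℝ) (2 * n * (1 - (n : ℝ) ^ a)) = n := by
  have hsmall : ∀ᶠ n : ℕ in atTop, (n : ℝ) ^ a ≤ 1 / 2 :=
    ((tendsto_rpow_neg_atTop (neg_pos.2 ha)).comp tendsto_natCast_atTop_atTop).eventually_le_const
      (show (0 : ℝ) < 1 / 2 by norm_num) |>.mono fun n hn => by simpa using hn
  filter_upwards [hsmall] with n hn
  exact min_eq_left (by nlinarith [n.cast_nonneg (α := ℝ)])

theorem natCeil_rpow_mul_exp_le {x d c : ℝ} (hx : 1 ≤ x) (hd₀ : 0 ≤ d) (hd₁ : d ≤ 1)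
    (hc : 0 ≤ c) :
    (⌈x ^ d⌉₊ : ℝ) * exp (-c * (x / ⌈x ^ d⌉₊))
      ≤ 2 * (x * exp (-(c / 2) * x ^ (1 - d))) := by
  have hxd : 1 ≤ x ^ d := one_le_rpow hx hd₀
  have hceil_ge : x ^ d ≤ ⌈x ^ d⌉₊ := Nat.le_ceil _
  have hceil_le : (⌈x ^ d⌉₊ : ℝ) ≤ 2 * x ^ d := Nat.ceil_le_two_mul (by linarith)
  have hxd_le : x ^ d ≤ x := by simpa using rpow_le_rpow_of_exponent_le hx hd₁
  have hratio : x ^ (1 - d) / 2 ≤ x / ⌈x ^ d⌉₊ := by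
    rw [rpow_sub (by linarith), rpow_one, div_div]
    gcongr
    linarith
  calc (⌈x ^ d⌉₊ : ℝ) * exp (-c * (x / ⌈x ^ d⌉₊))
      ≤ (2 * x) * exp (-(c / 2) * x ^ (1 - d)) := by
        have hexponent : -c * (x / ⌈x ^ d⌉₊) ≤ -(c / 2) * x ^ (1 - d) := by
          nlinarith [mul_le_mul_of_nonneg_left hratio hc]
        exact mul_le_mul (by linarith) (exp_le_exp.2 hexponent) (exp_pos _).le (by linarith)
    _ = 2 * (x * exp (-(c / 2) * x ^ (1 - d))) := by ring

/-- Lemma 2: with `0 < d < b < 1`, `m_n = ⌈n^d⌉` bins (base stations) and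
`ς_n = ⌈min{n, 2n(1 − n^{d−b})}⌉` balls (flows) placed independently and
uniformly at random into the bins (an outcome is a function
`Fin ς_n → Fin m_n`, all outcomes equally likely), the probability that the
maximum bin load is at most `2·ς_n/m_n` tends to `1` as `n → ∞`. -/
theorem stmt_9 (b d : ℝ) (hd : 0 < d) (hdb : d < b) (hb : b < 1) :
    Filter.Tendsto
      (fun n : ℕ =>
        ((Finset.univ.filter
            (fun ω : Fin ⌈min (n : ℝ) (2 * (n : ℝ) * (1 - (n : ℝ) ^ (d - b)))⌉₊ →
                  Fin ⌈(n : ℝ) ^ d⌉₊ =>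
              ∀ i,
                ((Finset.univ.filter (fun j => ω j = i)).card : ℝ)
                  ≤ 2 * (⌈min (n : ℝ) (2 * (n : ℝ) * (1 - (n : ℝ) ^ (d - b)))⌉₊ : ℝ)
                      / (⌈(n : ℝ) ^ d⌉₊ : ℝ))).card : ℝ)
          / (⌈(n : ℝ) ^ d⌉₊ : ℝ)
              ^ (⌈min (n : ℝ) (2 * (n : ℝ) * (1 - (n : ℝ) ^ (d - b)))⌉₊ : ℕ))
      Filter.atTop (nhds 1) := by
  have hc : 0 < 2 * log 2 - 1 := by linarith [log_two_gt_d9]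
  have hd₁ : 0 < 1 - d := by linarith
  have hlower : Tendsto (fun n : ℕ => 1 - 2 * (n * exp (-((2 * log 2 - 1) / 2) * n ^ (1 - d))))
      atTop (𝓝 1) := by
    simpa using ((tendsto_natCast_mul_exp_neg_mul_rpow (half_pos hc) hd₁).const_mul 2).const_sub 1
  show Tendsto (fun n : ℕ => probMaxLoadLE _ _ _) _ _
  refine tendsto_of_tendsto_of_tendsto_of_le_of_le' hlower tendsto_const_nhds ?_
    (Eventually.of_forall fun n => probMaxLoadLE_le_one _ _ _)
  filter_upwards [eventually_ge_atTop 1, eventually_min_self_two_mul_one_sub_rpow (sub_neg.2 hdb)]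
    with n hn hmin
  have hn' : (1 : ℝ) ≤ n := by exact_mod_cast hn
  rw [hmin, Nat.ceil_natCast]
  calc _ ≤ 1 - ⌈(n : ℝ) ^ d⌉₊ * exp (-(2 * log 2 - 1) * (n / ⌈(n : ℝ) ^ d⌉₊)) :=
        sub_le_sub_left (natCeil_rpow_mul_exp_le hn' hd.le (hdb.trans hb).le hc.le) 1
    _ ≤ _ := one_sub_mul_exp_le_probMaxLoadLE n (Nat.ceil_pos.2 (by positivity))
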